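/- If the set {xⁿ t s xᵐ : n, m ≥ 1} of words over three distinct letters x, t, s is stable with respect to a monoid M, then every block-simple word is a (τ₁ ∧ γ)-term for M. -/

import Mathlib

/-- Words over the countably infinite alphabet `ℕ`. -/
abbrev Word : Type := List ℕ

/-- A monoid `M` satisfies the identity `u ≈ v` if every substitution of letters by
elements of `M` (equivalently, every monoid homomorphism from the free monoid) equalizes
`u` and `v`. -/
def Satisfies (M : Type*) [Monoid M] (u v : Word) : Prop :=
  ∀ φ : ℕ → M, (u.map φ).prod = (v.map φ).prod

/-- A set of words `W` is stable with respect to a monoid `M`. -/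
def Stable (W : Set Word) (M : Type*) [Monoid M] : Prop :=
  ∀ u v : Word, u ∈ W → Satisfies M u v → v ∈ W

/-- `u` is a `τ`-term for the monoid `M`. -/
def IsTerm (τ : Word → Word → Prop) (M : Type*) [Monoid M] (u : Word) : Prop :=
  ∀ v : Word, Satisfies M u v → τ u v

/-- The set of simple letters of a word. -/
def simpSet (u : Word) : Set ℕ := {x | u.count x = 1}

/-- The set of multiple letters of a word. -/
def mulSet (u : Word) : Set ℕ := {x | 2 ≤ u.count x}

/-- The set of letters of a word. -/
def conSet (u : Word) : Set ℕ := {x | x ∈ u}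

/-- The monoid congruence on the free monoid generated by the pairs `(a, a²)`. -/
inductive tau1 : Word → Word → Prop
  | base (a : ℕ) : tau1 [a] [a, a]
  | refl (u : Word) : tau1 u u
  | symm {u v : Word} : tau1 u v → tau1 v u
  | trans {u v x : Word} : tau1 u v → tau1 v x → tau1 u x
  | append {u v u' v' : Word} : tau1 u v → tau1 u' v' → tau1 (u ++ u') (v ++ v')

/-- The relation γ. -/
def gamma (u v : Word) : Prop := simpSet u = simpSet v ∧ mulSet u = mulSet v

/-- The relation `τ₁ ∧ γ`. -/
def tau1gamma (u v : Word) : Prop := tau1 u v ∧ gamma u v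

/-- A word is block-simple if every factor all of whose letters are multiple
(in particular, every block) involves at most one letter. -/
def BlockSimple (u : Word) : Prop :=
  ∀ p f s : Word, u = p ++ f ++ s → (∀ x ∈ f, x ∈ mulSet u) →
    ∀ x ∈ f, ∀ y ∈ f, x = y

/-- `assemble m t A = A 0 ++ t 0 :: A 1 ++ t 1 :: ... ++ t (m-1) :: A m`:
the word with blocks `A i` separated by the letters `t i`. -/
def assemble (m : ℕ) (t : Fin m → ℕ) (A : Fin (m + 1) → Word) : Word :=
  A 0 ++ (List.ofFn fun i : Fin m => t i :: A i.succ).flatten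

/-- Common core of the relations `β` and `∼_Q`: `u` and `v` decompose into blocks
separated by the same simple letters in the same order, corresponding blocks have the
same content; when `withOrder = true`, in corresponding blocks the order of first
occurrences of letters coincides. -/
def betaAux (withOrder : Bool) (u v : Word) : Prop :=
  ∃ (m : ℕ) (t : Fin m → ℕ) (A B : Fin (m + 1) → Word),
    u = assemble m t A ∧ v = assemble m t B ∧
    (∀ i : Fin m, u.count (t i) = 1) ∧ (∀ i : Fin m, v.count (t i) = 1) ∧
    (∀ i : Fin (m + 1), ∀ x ∈ A i, x ∈ mulSet u) ∧
    (∀ i : Fin (m + 1), ∀ x ∈ B i, x ∈ mulSet v) ∧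
    (∀ i : Fin (m + 1), ∀ x : ℕ, x ∈ A i ↔ x ∈ B i) ∧
    (withOrder = true → ∀ i : Fin (m + 1), ∀ x y : ℕ, x ∈ A i → y ∈ A i → x ≠ y →
      ((A i).idxOf x < (A i).idxOf y ↔ (B i).idxOf x < (B i).idxOf y))

/-- The relation β. -/
def beta : Word → Word → Prop := betaAux true

/-- The relation `∼_Q` (β without the condition on the order of first occurrences). -/
def simQ : Word → Word → Prop := betaAux false

/-- The words `u_n` (letters: `a = 0`, `b = 1`, `t_k = k + 1`). -/
def uW : ℕ → Word
  | 0 => [0, 0, 1, 1]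
  | k + 1 => (if k % 2 = 0 then 0 else 1) :: (k + 2) :: uW k

/-- The words `v_n` (letters: `a = 0`, `b = 1`, `t_k = k + 1`). -/
def vW : ℕ → Word
  | 0 => [1, 1, 0, 0]
  | k + 1 => (if k % 2 = 0 then 0 else 1) :: (k + 2) :: vW k

/-- A monoid satisfies the identity system
`Σ_n = {xtx ≈ xtx², xtx ≈ x²tx, xy²x ≈ x²y², u_n ≈ v_n}`. -/
def SatSigma (n : ℕ) (N : Type*) [Monoid N] : Prop :=
  Satisfies N [0, 1, 0] [0, 1, 0, 0] ∧ Satisfies N [0, 1, 0] [0, 0, 1, 0] ∧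
  Satisfies N [0, 1, 1, 0] [0, 0, 1, 1] ∧ Satisfies N (uW n) (vW n)

/-- A monoid is finitely based. -/
def FinBased (M : Type*) [Monoid M] : Prop :=
  ∃ S : Finset (Word × Word),
    (∀ p ∈ S, Satisfies M p.1 p.2) ∧
    ∀ (N : Type) [Monoid N], (∀ p ∈ S, Satisfies N p.1 p.2) →
      ∀ u v : Word, Satisfies M u v → Satisfies N u v

/-- `U_n = x y₁² y₂² ⋯ y_n² x` (letters: `x = 0`, `y_i = i`). -/
def Uw (n : ℕ) : Word := 0 :: (((List.range n).map fun i => [i + 1, i + 1]).flatten ++ [0])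

/-- `V_n = x y₁² x y₂² x ⋯ x y_n² x` (letters: `x = 0`, `y_i = i`). -/
def Vw (n : ℕ) : Word := 0 :: ((List.range n).map fun i => [i + 1, i + 1, 0]).flatten

/-- The language `a⁺bb⁺ta⁺ = {aⁱ bʲ t aᵏ : i, k ≥ 1, j ≥ 2}` (`a = 0`, `b = 1`, `t = 2`). -/
def Lab : Set Word := {w | ∃ i j k : ℕ, 1 ≤ i ∧ 2 ≤ j ∧ 1 ≤ k ∧
  w = List.replicate i 0 ++ List.replicate j 1 ++ 2 :: List.replicate k 0}

/-- The β-class of `atb²a` as an explicit language: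
`{aⁱ t bʲ a w : i ≥ 1, j ≥ 2} ∪ {aⁱ t bʲ aᵏ b w : i, j, k ≥ 1}`, `w ∈ {a,b}*`
(`a = 0`, `b = 1`, `t = 2`). -/
def LatBBa : Set Word :=
  {w | (∃ i j : ℕ, 1 ≤ i ∧ 2 ≤ j ∧ ∃ r : Word, (∀ x ∈ r, x = 0 ∨ x = 1) ∧
      w = List.replicate i 0 ++ 2 :: (List.replicate j 1 ++ 0 :: r)) ∨
    (∃ i j k : ℕ, 1 ≤ i ∧ 1 ≤ j ∧ 1 ≤ k ∧ ∃ r : Word, (∀ x ∈ r, x = 0 ∨ x = 1) ∧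
      w = List.replicate i 0 ++ 2 :: (List.replicate j 1 ++ (List.replicate k 0 ++ 1 :: r)))}

/-- `u` is a factor (subword) of `x`. -/
def IsFactorOf (u x : Word) : Prop := ∃ p s : Word, x = p ++ u ++ s

/-- The syntactic congruence of a language `W`. -/
def SyntCon (W : Set Word) : Con (FreeMonoid ℕ) where
  r u v := ∀ p s : Word,
    p ++ FreeMonoid.toList u ++ s ∈ W ↔ p ++ FreeMonoid.toList v ++ s ∈ W
  iseqv := ⟨fun _ _ _ => Iff.rfl, fun h p s => (h p s).symm,
    fun h h' p s => (h p s).trans (h' p s)⟩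
  mul' := by
    intro w x y z h h' p s
    have h1 := h p (FreeMonoid.toList y ++ s)
    have h2 := h' (p ++ FreeMonoid.toList x) s
    simp only [FreeMonoid.toList_mul, List.append_assoc] at h1 h2 ⊢
    exact h1.trans h2

/-- The syntactic monoid of a language `W`. -/
abbrev SyntMonoid (W : Set Word) : Type := (SyntCon W).Quotient

/-! ### Concrete finite monoids -/

/-- The 7-element monoid `A¹`: identity `e1` adjoined to the semigroup `A = ⟨a,b,c ∣ a²=a, b²=b, ab=ca=0, ac=cb=c⟩ = {a,b,c,ba,bc,0}` (`z0` is the zero). -/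
inductive A1M : Type
  | e1 | a | b | c | ba | bc | z0
deriving DecidableEq

/-- Multiplication of `A1M`. -/
def A1M.mul : A1M → A1M → A1M
  | .e1, .e1 => .e1
  | .e1, .a => .a
  | .e1, .b => .b
  | .e1, .c => .c
  | .e1, .ba => .ba
  | .e1, .bc => .bc
  | .e1, .z0 => .z0
  | .a, .e1 => .a
  | .a, .a => .a
  | .a, .b => .z0
  | .a, .c => .c
  | .a, .ba => .z0
  | .a, .bc => .z0
  | .a, .z0 => .z0
  | .b, .e1 => .b
  | .b, .a => .ba
  | .b, .b => .b
  | .b, .c => .bc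
  | .b, .ba => .ba
  | .b, .bc => .bc
  | .b, .z0 => .z0
  | .c, .e1 => .c
  | .c, .a => .z0
  | .c, .b => .c
  | .c, .c => .z0
  | .c, .ba => .z0
  | .c, .bc => .z0
  | .c, .z0 => .z0
  | .ba, .e1 => .ba
  | .ba, .a => .ba
  | .ba, .b => .z0
  | .ba, .c => .bc
  | .ba, .ba => .z0
  | .ba, .bc => .z0
  | .ba, .z0 => .z0
  | .bc, .e1 => .bc
  | .bc, .a => .z0
  | .bc, .b => .bc
  | .bc, .c => .z0
  | .bc, .ba => .z0
  | .bc, .bc => .z0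
  | .bc, .z0 => .z0
  | .z0, .e1 => .z0
  | .z0, .a => .z0
  | .z0, .b => .z0
  | .z0, .c => .z0
  | .z0, .ba => .z0
  | .z0, .bc => .z0
  | .z0, .z0 => .z0

instance : Monoid A1M where
  one := .e1
  mul := A1M.mul
  mul_assoc := by intro x y z; cases x <;> cases y <;> cases z <;> rfl
  one_mul := by intro x; cases x <;> rfl
  mul_one := by intro x; cases x <;> rfl
/-- The 6-element monoid `E¹`: identity `e1` adjoined to the semigroup `E = ⟨a,b,c ∣ a²=ab=0, ba=ca=a, b²=bc=b, c²=cb=c⟩ = {a,b,c,ac,0}` (`z0` is the zero). -/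
inductive E1M : Type
  | e1 | a | b | c | ac | z0
deriving DecidableEq

/-- Multiplication of `E1M`. -/
def E1M.mul : E1M → E1M → E1M
  | .e1, .e1 => .e1
  | .e1, .a => .a
  | .e1, .b => .b
  | .e1, .c => .c
  | .e1, .ac => .ac
  | .e1, .z0 => .z0
  | .a, .e1 => .a
  | .a, .a => .z0
  | .a, .b => .z0
  | .a, .c => .ac
  | .a, .ac => .z0
  | .a, .z0 => .z0
  | .b, .e1 => .b
  | .b, .a => .a
  | .b, .b => .b
  | .b, .c => .b
  | .b, .ac => .ac
  | .b, .z0 => .z0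
  | .c, .e1 => .c
  | .c, .a => .a
  | .c, .b => .c
  | .c, .c => .c
  | .c, .ac => .ac
  | .c, .z0 => .z0
  | .ac, .e1 => .ac
  | .ac, .a => .z0
  | .ac, .b => .ac
  | .ac, .c => .ac
  | .ac, .ac => .z0
  | .ac, .z0 => .z0
  | .z0, .e1 => .z0
  | .z0, .a => .z0
  | .z0, .b => .z0
  | .z0, .c => .z0
  | .z0, .ac => .z0
  | .z0, .z0 => .z0

instance : Monoid E1M where
  one := .e1
  mul := E1M.mul
  mul_assoc := by intro x y z; cases x <;> cases y <;> cases z <;> rfl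
  one_mul := by intro x; cases x <;> rfl
  mul_one := by intro x; cases x <;> rfl
/-- The 5-element monoid `A₀¹`: identity `e1` adjoined to the semigroup `A₀ = ⟨a,b ∣ a²=a, b²=b, ab=0⟩ = {a,b,ba,0}` (`z0` is the zero). -/
inductive A01M : Type
  | e1 | a | b | ba | z0
deriving DecidableEq

/-- Multiplication of `A01M`. -/
def A01M.mul : A01M → A01M → A01M
  | .e1, .e1 => .e1
  | .e1, .a => .a
  | .e1, .b => .b
  | .e1, .ba => .ba
  | .e1, .z0 => .z0
  | .a, .e1 => .a
  | .a, .a => .a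
  | .a, .b => .z0
  | .a, .ba => .z0
  | .a, .z0 => .z0
  | .b, .e1 => .b
  | .b, .a => .ba
  | .b, .b => .b
  | .b, .ba => .ba
  | .b, .z0 => .z0
  | .ba, .e1 => .ba
  | .ba, .a => .ba
  | .ba, .b => .z0
  | .ba, .ba => .z0
  | .ba, .z0 => .z0
  | .z0, .e1 => .z0
  | .z0, .a => .z0
  | .z0, .b => .z0
  | .z0, .ba => .z0
  | .z0, .z0 => .z0

instance : Monoid A01M where
  one := .e1
  mul := A01M.mul
  mul_assoc := by intro x y z; cases x <;> cases y <;> cases z <;> rfl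
  one_mul := by intro x; cases x <;> rfl
  mul_one := by intro x; cases x <;> rfl


/-- The 3-element monoid `L₂¹`: the two-element left-zero semigroup with identity adjoined. -/
inductive LZ1 : Type
  | e | a | b
deriving DecidableEq

instance : Fintype LZ1 := Fintype.ofList [.e, .a, .b] (by intro x; cases x <;> decide)

instance : Monoid LZ1 where
  one := .e
  mul x y := match x with
    | .e => y
    | .a => .a
    | .b => .b
  mul_assoc := by decide
  one_mul := by decide
  mul_one := by decide

/-- The 3-element monoid `M(x) = {1, x, 0}` with `x·x = 0`. -/
inductive MX : Type
  | e | x | z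
deriving DecidableEq

instance : Fintype MX := Fintype.ofList [.e, .x, .z] (by intro x; cases x <;> decide)

instance : Monoid MX where
  one := .e
  mul a b := match a, b with
    | .e, b => b
    | a, .e => a
    | _, _ => .z
  mul_assoc := by decide
  one_mul := by decide
  mul_one := by decide


/-!
Substituting `0`, `1`, `2` for some letters of an identity `u ≈ v` of `M` and erasing the other
letters yields another identity of `M`; after padding with `0`s, its two sides then lie in
`{0ⁿ 1 2 0ᵐ}` together or not at all. With `s ↦ 1`, `t ↦ 2`, `x ↦ 0` this membership says that
`s` precedes `t` with no `x` in between, and with `x ↦ 12`, `y ↦ 0` (for `y ≠ x`) it says that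
`x` is simple. Hence `u` and `v` have the same simple letters in the same order, and corresponding
blocks have the same content. When `u` is block-simple, each of its blocks is a power of one letter,
so `v` differs from `u` only in the exponents of these powers, which is what `τ₁` allows.
-/

open scoped List

namespace List

variable {α : Type*}

theorem Nodup.not_pair_sublist_swap {l : List α} {a b : α} (hl : l.Nodup) (h : [a, b] <+ l) :
    ¬[b, a] <+ l := by
  induction l with
  | nil => simp at h
  | cons c l ih =>
    rw [nodup_cons] at hl
    intro h'
    rw [sublist_cons_iff] at h h'
    grind

theorem eq_of_perm_of_pair_sublist {l₁ l₂ : List α} (hl₂ : l₂.Nodup) (hp : l₁ ~ l₂)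
    (h : ∀ a b, [a, b] <+ l₁ → [a, b] <+ l₂) : l₁ = l₂ :=
  hp.eq_of_pairwise (le := fun a b => [a, b] <+ l₂)
    (fun _ _ _ _ hab hba => absurd hba (hl₂.not_pair_sublist_swap hab))
    (pairwise_of_forall_sublist (h _ _)) (pairwise_of_forall_sublist id)

theorem exists_eq_append_of_pair_sublist {s t : α} {l : List α} (h : [s, t] <+ l) :
    ∃ p q r, l = p ++ s :: q ++ t :: r := by
  obtain ⟨l₁, l₂, rfl, hs, ht⟩ := cons_sublist_iff.1 h
  obtain ⟨p, q, rfl⟩ := append_of_mem hs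
  obtain ⟨q', r, rfl⟩ := append_of_mem (singleton_sublist.1 ht)
  exact ⟨p, q ++ q', r, by simp⟩

variable [DecidableEq α]

theorem notMem_of_count_append_cons_eq_one {a : α} {p q : List α}
    (h : (p ++ a :: q).count a = 1) : a ∉ p ∧ a ∉ q := by
  simp only [count_append, count_cons_self] at h
  exact ⟨count_eq_zero.1 (by omega), count_eq_zero.1 (by omega)⟩

theorem ne_and_notMem_of_count_eq_one {l p q r : List α} {s t : α}
    (hl : l = p ++ s :: q ++ t :: r) (hs : l.count s = 1) (ht : l.count t = 1) :
    s ≠ t ∧ s ∉ p ∧ s ∉ q ∧ s ∉ r ∧ t ∉ p ∧ t ∉ q ∧ t ∉ r := by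
  obtain ⟨hsp, hs'⟩ := notMem_of_count_append_cons_eq_one (p := p) (q := q ++ t :: r)
    (by simpa [hl] using hs)
  obtain ⟨ht', htr⟩ := notMem_of_count_append_cons_eq_one (p := p ++ s :: q) (q := r)
    (by simpa [hl] using ht)
  simp only [mem_append, mem_cons, not_or] at hs' ht'
  tauto

end List

theorem tau1_singleton_replicate (a : ℕ) : ∀ n, tau1 [a] (List.replicate (n + 1) a)
  | 0 => tau1.refl _
  | n + 1 => (tau1.base a).trans (tau1.append (tau1.refl [a]) (tau1_singleton_replicate a n))

theorem tau1_of_toFinset_eq {A B : Word} (hA : ∀ x ∈ A, ∀ y ∈ A, x = y)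
    (hAB : A.toFinset = B.toFinset) : tau1 A B := by
  rcases A with _ | ⟨a, A⟩
  · rw [List.toFinset_nil, eq_comm, List.toFinset_eq_empty_iff] at hAB
    exact hAB ▸ tau1.refl []
  have hB : ∀ x ∈ B, x = a := fun x hx =>
    hA x (by simpa [← List.mem_toFinset, hAB] using hx) a List.mem_cons_self
  obtain ⟨n, hn⟩ : ∃ n, B.length = n + 1 :=
    Nat.exists_eq_succ_of_ne_zero (by simp [← List.toFinset_eq_empty_iff, ← hAB])
  rw [List.eq_replicate_of_mem (fun x hx => hA x hx a List.mem_cons_self),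
    List.eq_replicate_of_mem hB, List.length_cons, hn]
  exact (tau1_singleton_replicate a _).symm.trans (tau1_singleton_replicate a n)

def BlockSimpleWith (S : ℕ → Bool) (u : Word) : Prop :=
  ∀ p f r, u = p ++ f ++ r → (∀ x ∈ f, S x = false) → ∀ x ∈ f, ∀ y ∈ f, x = y

theorem BlockSimpleWith.of_append {S : ℕ → Bool} {p u : Word}
    (h : BlockSimpleWith S (p ++ u)) : BlockSimpleWith S u := fun q f r hu =>
  h (p ++ q) f r (by rw [hu]; simp)

theorem BlockSimple.blockSimpleWith {u : Word} (hu : BlockSimple u) :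
    BlockSimpleWith (fun x => u.count x = 1) u := fun p f r hpfr hf =>
  hu p f r hpfr fun x hx => by
    have hpos : 0 < u.count x := List.count_pos_iff.2 (by rw [hpfr]; simp [hx])
    have hne : u.count x ≠ 1 := by simpa using hf x hx
    show 2 ≤ u.count x
    omega

structure SameBlockContent (S : ℕ → Bool) (u v : Word) : Prop where
  whole : u.toFinset = v.toFinset
  head : ∀ t p q p' q', S t → u = p ++ t :: q → v = p' ++ t :: q' → p.toFinset = p'.toFinset
  mid : ∀ s t p q r p' q' r', S s → S t → u = p ++ s :: q ++ t :: r →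
    v = p' ++ s :: q' ++ t :: r' → q.toFinset = q'.toFinset
  tail : ∀ t p q p' q', S t → u = p ++ t :: q → v = p' ++ t :: q' → q.toFinset = q'.toFinset

theorem SameBlockContent.drop_head {S : ℕ → Bool} {t : ℕ} {A B u v : Word}
    (h : SameBlockContent S (A ++ t :: u) (B ++ t :: v)) (ht : S t) :
    SameBlockContent S u v where
  whole := h.tail t A u B v ht rfl rfl
  head t' p q p' q' ht' hu hv := h.mid t t' A p q B p' q' ht ht' (by simp [hu]) (by simp [hv])
  mid s t' p q r p' q' r' hs ht' hu hv :=
    h.mid s t' (A ++ t :: p) q r (B ++ t :: p') q' r' hs ht' (by simp [hu]) (by simp [hv])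
  tail t' p q p' q' ht' hu hv :=
    h.tail t' (A ++ t :: p) q (B ++ t :: p') q' ht' (by simp [hu]) (by simp [hv])

theorem tau1_of_sameBlockContent {S : ℕ → Bool} {u v : Word} (hskel : u.filter S = v.filter S)
    (hbs : BlockSimpleWith S u) (h : SameBlockContent S u v) : tau1 u v := by
  induction hL : u.filter S generalizing u v with
  | nil =>
    rw [List.filter_eq_nil_iff] at hL
    exact tau1_of_toFinset_eq (hbs [] u [] (by simp) (by simpa using hL)) h.whole
  | cons t L ih =>
    obtain ⟨A, u', rfl, hA, ht, hu'⟩ := List.filter_eq_cons_iff.1 hL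
    obtain ⟨B, v', rfl, -, -, hv'⟩ := List.filter_eq_cons_iff.1 (hskel ▸ hL)
    have hAB : tau1 A B := tau1_of_toFinset_eq
      (hbs [] A (t :: u') (by simp) (by simpa using hA)) (h.head t A u' B v' ht rfl rfl)
    have hrest : tau1 u' v' := ih (hu'.trans hv'.symm)
      (BlockSimpleWith.of_append (p := A ++ [t]) (by simpa using hbs)) (h.drop_head ht) hu'
    exact hAB.append ((tau1.refl [t]).append hrest)

def skeleton (u : Word) : List ℕ := u.filter fun x => u.count x = 1

theorem mem_skeleton {u : Word} {x : ℕ} : x ∈ skeleton u ↔ u.count x = 1 := by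
  simp only [skeleton, List.mem_filter, decide_eq_true_eq, and_iff_right_iff_imp]
  exact fun hx => List.count_pos_iff.1 (by omega)

theorem nodup_skeleton (u : Word) : (skeleton u).Nodup :=
  List.nodup_iff_count_le_one.2 fun x => by
    by_cases hx : u.count x = 1
    · simp [skeleton, hx]
    · simp [List.count_eq_zero.2 (mt mem_skeleton.1 hx)]

theorem gamma_of_count_eq_one_iff {u v : Word} (hmem : u.toFinset = v.toFinset)
    (hsimple : ∀ x, u.count x = 1 ↔ v.count x = 1) : gamma u v := by
  refine ⟨Set.ext hsimple, Set.ext fun x => ?_⟩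
  have hpos : 0 < u.count x ↔ 0 < v.count x := by
    simpa only [List.count_pos_iff, List.mem_toFinset] using Finset.ext_iff.1 hmem x
  have := hsimple x
  show 2 ≤ u.count x ↔ 2 ≤ v.count x
  omega

section Satisfies

variable {M : Type*} [Monoid M] {u v : Word}

theorem Satisfies.symm (h : Satisfies M u v) : Satisfies M v u := fun φ => (h φ).symm

theorem Satisfies.flatMap (h : Satisfies M u v) (σ : ℕ → Word) :
    Satisfies M (u.flatMap σ) (v.flatMap σ) := fun φ => by
  simpa [List.flatMap_def, List.prod_flatten, Function.comp_def] using
    h fun x => ((σ x).map φ).prod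

theorem Satisfies.context (h : Satisfies M u v) (p s : Word) :
    Satisfies M (p ++ u ++ s) (p ++ v ++ s) := fun φ => by
  simp [h φ]

theorem Stable.wrap_flatMap_mem {W : Set Word} (hW : Stable W M) (h : Satisfies M u v)
    (σ : ℕ → Word) (p s : Word) (hu : p ++ u.flatMap σ ++ s ∈ W) : p ++ v.flatMap σ ++ s ∈ W :=
  hW _ _ hu ((h.flatMap σ).context p s)

end Satisfies

def xtsLang : Set Word :=
  {w | ∃ n m : ℕ, 1 ≤ n ∧ 1 ≤ m ∧ w = List.replicate n 0 ++ 1 :: 2 :: List.replicate m 0}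

theorem replicate_zero_append_cons_inj {a b x y : ℕ} {p q : Word} (hx : x ≠ 0) (hy : y ≠ 0) :
    List.replicate a 0 ++ x :: p = List.replicate b 0 ++ y :: q ↔ a = b ∧ x = y ∧ p = q := by
  refine ⟨fun h => ?_, by rintro ⟨rfl, rfl, rfl⟩; rfl⟩
  have h₁ := congrArg (List.dropWhile (· = 0)) h
  have h₂ := congrArg (List.takeWhile (· = 0)) h
  simp [hx, hy] at h₁ h₂
  grind

theorem mem_xtsLang_iff {a b c : ℕ} :
    List.replicate a 0 ++ 1 :: (List.replicate b 0 ++ 2 :: List.replicate c 0) ∈ xtsLang ↔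
      1 ≤ a ∧ b = 0 ∧ 1 ≤ c := by
  refine ⟨fun ⟨n, m, hn, hm, h⟩ => ?_, fun ⟨ha, hb, hc⟩ => ⟨a, c, ha, hc, by simp [hb]⟩⟩
  obtain ⟨rfl, -, h⟩ := (replicate_zero_append_cons_inj one_ne_zero one_ne_zero).1 h
  obtain ⟨rfl, -, hcm⟩ := (replicate_zero_append_cons_inj (b := 0) two_ne_zero two_ne_zero).1
    (by simpa using h)
  exact ⟨hn, rfl, List.replicate_left_inj.1 hcm ▸ hm⟩

theorem replicate_zero_append_two_notMem_xtsLang {a : ℕ} {w : Word} :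
    List.replicate a 0 ++ 2 :: w ∉ xtsLang := by
  rintro ⟨n, m, -, -, h⟩
  simp [replicate_zero_append_cons_inj] at h

theorem count_one_of_mem_xtsLang {w : Word} (hw : w ∈ xtsLang) : w.count 1 = 1 := by
  obtain ⟨n, m, -, -, rfl⟩ := hw
  simp [List.count_replicate]

def markLetters (s t x y : ℕ) : Word :=
  if y = s then [1] else if y = t then [2] else if y = x then [0] else []

theorem flatMap_markLetters_of_notMem {s t x : ℕ} {w : Word} (hs : s ∉ w) (ht : t ∉ w) :
    w.flatMap (markLetters s t x) = List.replicate (w.count x) 0 := by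
  induction w with
  | nil => rfl
  | cons y w ih =>
    simp only [List.mem_cons, not_or] at hs ht
    rw [List.flatMap_cons, ih hs.2 ht.2, List.count_cons]
    by_cases hy : y = x
    · subst hy
      simp [markLetters, Ne.symm hs.1, Ne.symm ht.1, List.replicate_succ]
    · simp [markLetters, Ne.symm hs.1, Ne.symm ht.1, hy]

theorem wrap_flatMap_markLetters_mem_xtsLang_iff {w p q r : Word} {s t x : ℕ}
    (hw : w = p ++ s :: q ++ t :: r) (hs : w.count s = 1) (ht : w.count t = 1) :
    [0] ++ w.flatMap (markLetters s t x) ++ [0] ∈ xtsLang ↔ x ∉ q := by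
  obtain ⟨hst, hsp, hsq, hsr, htp, htq, htr⟩ := List.ne_and_notMem_of_count_eq_one hw hs ht
  have : [0] ++ w.flatMap (markLetters s t x) ++ [0] = List.replicate (p.count x + 1) 0 ++
      1 :: (List.replicate (q.count x) 0 ++ 2 :: List.replicate (r.count x + 1) 0) := by
    simp [hw, flatMap_markLetters_of_notMem, hsp, hsq, hsr, htp, htq, htr, markLetters, Ne.symm hst,
      List.replicate_succ, ← List.replicate_succ']
  rw [this, mem_xtsLang_iff]
  simp [List.count_eq_zero]

theorem wrap_flatMap_markLetters_notMem_xtsLang {w p q r : Word} {s t x : ℕ}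
    (hw : w = p ++ t :: q ++ s :: r) (hs : w.count s = 1) (ht : w.count t = 1) :
    [0] ++ w.flatMap (markLetters s t x) ++ [0] ∉ xtsLang := by
  obtain ⟨hts, htp, htq, htr, hsp, hsq, hsr⟩ := List.ne_and_notMem_of_count_eq_one hw ht hs
  have : [0] ++ w.flatMap (markLetters s t x) ++ [0] = List.replicate (p.count x + 1) 0 ++
      2 :: (List.replicate (q.count x) 0 ++ 1 :: List.replicate (r.count x + 1) 0) := by
    simp [hw, flatMap_markLetters_of_notMem, hsp, hsq, hsr, htp, htq, htr, markLetters, hts,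
      List.replicate_succ, ← List.replicate_succ']
  rw [this]
  exact replicate_zero_append_two_notMem_xtsLang

def isolateLetter (x y : ℕ) : Word := if y = x then [1, 2] else [0]

theorem count_flatMap_isolateLetter (x : ℕ) (w : Word) :
    (w.flatMap (isolateLetter x)).count 1 = w.count x := by
  induction w with
  | nil => rfl
  | cons y w ih => by_cases hy : y = x <;> simp [isolateLetter, hy, ih]

theorem flatMap_isolateLetter_of_notMem {x : ℕ} {w : Word} (h : x ∉ w) :
    w.flatMap (isolateLetter x) = List.replicate w.length 0 := by
  induction w with
  | nil => rfl
  | cons y w ih =>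
    simp only [List.mem_cons, not_or] at h
    simp [isolateLetter, Ne.symm h.1, ih h.2, List.replicate_succ]

theorem wrap_flatMap_isolateLetter_mem_xtsLang {x : ℕ} {w : Word} (hx : w.count x = 1) :
    [0] ++ w.flatMap (isolateLetter x) ++ [0] ∈ xtsLang := by
  obtain ⟨p, q, rfl⟩ := List.append_of_mem (List.count_pos_iff.1 (by omega : 0 < w.count x))
  obtain ⟨hp, hq⟩ := List.notMem_of_count_append_cons_eq_one hx
  have : [0] ++ (p ++ x :: q).flatMap (isolateLetter x) ++ [0] = List.replicate (p.length + 1) 0 ++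
      1 :: (List.replicate 0 0 ++ 2 :: List.replicate (q.length + 1) 0) := by
    simp [flatMap_isolateLetter_of_notMem hp, flatMap_isolateLetter_of_notMem hq, isolateLetter,
      List.replicate_succ, ← List.replicate_succ']
  rw [this, mem_xtsLang_iff]
  simp

section Stable

variable {M : Type*} [Monoid M] {u v : Word}

theorem count_eq_one_of_satisfies (hW : Stable xtsLang M) (h : Satisfies M u v) {x : ℕ}
    (hx : u.count x = 1) : v.count x = 1 := by
  rw [← count_flatMap_isolateLetter]
  simpa using count_one_of_mem_xtsLang
    (hW.wrap_flatMap_mem h _ _ _ (wrap_flatMap_isolateLetter_mem_xtsLang hx))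

theorem subset_of_satisfies (hW : Stable xtsLang M) (h : Satisfies M u v) {s t : ℕ}
    {p q r p' q' r' : Word} (hu : u = p ++ s :: q ++ t :: r) (hv : v = p' ++ s :: q' ++ t :: r')
    (hs : u.count s = 1) (ht : u.count t = 1) : q' ⊆ q := fun x hx => by
  by_contra hxq
  have := hW.wrap_flatMap_mem h (markLetters s t x) [0] [0]
    ((wrap_flatMap_markLetters_mem_xtsLang_iff hu hs ht).2 hxq)
  exact (wrap_flatMap_markLetters_mem_xtsLang_iff hv (count_eq_one_of_satisfies hW h hs)
    (count_eq_one_of_satisfies hW h ht)).1 this hx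

theorem toFinset_eq_of_satisfies (hW : Stable xtsLang M) (h : Satisfies M u v) {s t : ℕ}
    {p q r p' q' r' : Word} (hu : u = p ++ s :: q ++ t :: r) (hv : v = p' ++ s :: q' ++ t :: r')
    (hs : u.count s = 1) (ht : u.count t = 1) : q.toFinset = q'.toFinset := by
  have hs' := count_eq_one_of_satisfies hW h hs
  have ht' := count_eq_one_of_satisfies hW h ht
  ext x
  simp only [List.mem_toFinset]
  exact ⟨fun hx => subset_of_satisfies hW h.symm hv hu hs' ht' hx,
    fun hx => subset_of_satisfies hW h hu hv hs ht hx⟩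

theorem pair_sublist_of_satisfies (hW : Stable xtsLang M) (h : Satisfies M u v) {s t : ℕ}
    (hs : u.count s = 1) (ht : u.count t = 1) (hst : [s, t] <+ u) : [s, t] <+ v := by
  obtain ⟨p, q, r, hu⟩ := List.exists_eq_append_of_pair_sublist hst
  obtain ⟨hne, -, hsq, -⟩ := List.ne_and_notMem_of_count_eq_one hu hs ht
  have hs' := count_eq_one_of_satisfies hW h hs
  have ht' := count_eq_one_of_satisfies hW h ht
  obtain ⟨p', q', hv⟩ := List.append_of_mem (List.count_pos_iff.1 (by omega : 0 < v.count t))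
  by_cases hsp : s ∈ p'
  · rw [hv]
    exact (List.singleton_sublist.2 hsp).append (List.singleton_sublist.2 List.mem_cons_self)
  have hsq' : s ∈ q' := by
    have : s ∈ v := List.count_pos_iff.1 (by omega)
    simpa [hv, hsp, hne] using this
  obtain ⟨q₁, q₂, rfl⟩ := List.append_of_mem hsq'
  have hmem := hW.wrap_flatMap_mem h (markLetters s t s) [0] [0]
    ((wrap_flatMap_markLetters_mem_xtsLang_iff hu hs ht).2 hsq)
  exact absurd hmem (wrap_flatMap_markLetters_notMem_xtsLang (p := p') (q := q₁) (r := q₂)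
    (by simp [hv]) hs' ht')

theorem count_eq_one_iff_of_satisfies (hW : Stable xtsLang M) (h : Satisfies M u v) (x : ℕ) :
    u.count x = 1 ↔ v.count x = 1 :=
  ⟨count_eq_one_of_satisfies hW h, count_eq_one_of_satisfies hW h.symm⟩

theorem skeleton_eq_of_satisfies (hW : Stable xtsLang M) (h : Satisfies M u v) :
    skeleton u = skeleton v := by
  have hsimple := count_eq_one_iff_of_satisfies hW h
  refine List.eq_of_perm_of_pair_sublist (nodup_skeleton v)
    ((List.perm_ext_iff_of_nodup (nodup_skeleton u) (nodup_skeleton v)).2 fun x => by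
      rw [mem_skeleton, mem_skeleton, hsimple]) fun s t hst => ?_
  have hs : u.count s = 1 := mem_skeleton.1 (hst.subset (by simp))
  have ht : u.count t = 1 := mem_skeleton.1 (hst.subset (by simp))
  have := (pair_sublist_of_satisfies hW h hs ht (hst.trans List.filter_sublist)).filter
    (fun x => v.count x = 1)
  simpa [skeleton, (hsimple s).1 hs, (hsimple t).1 ht] using this

theorem sameBlockContent_of_satisfies (hW : Stable xtsLang M) (h : Satisfies M u v) :
    SameBlockContent (fun x => u.count x = 1) u v := by
  -- Fresh end markers `a`, `b` turn the head, the tail and the whole word into middle blocks.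
  obtain ⟨a, ha⟩ := Infinite.exists_notMem_finset (u ++ v).toFinset
  obtain ⟨b, hb⟩ := Infinite.exists_notMem_finset (insert a (u ++ v).toFinset)
  simp only [List.toFinset_append, Finset.mem_insert, Finset.mem_union, List.mem_toFinset,
    not_or] at ha hb
  have hpad : Satisfies M (a :: (u ++ [b])) (a :: (v ++ [b])) := h.context [a] [b]
  have hcount : ∀ x, decide (u.count x = 1) → (a :: (u ++ [b])).count x = 1 := fun x hx => by
    rw [decide_eq_true_eq] at hx
    have hxu : x ∈ u := List.count_pos_iff.1 (by omega)
    simp [hx, (ne_of_mem_of_not_mem hxu ha.1).symm, (ne_of_mem_of_not_mem hxu hb.2.1).symm]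
  have ha₁ : (a :: (u ++ [b])).count a = 1 := by simp [List.count_eq_zero.2 ha.1, hb.1]
  have hb₁ : (a :: (u ++ [b])).count b = 1 := by simp [List.count_eq_zero.2 hb.2.1, Ne.symm hb.1]
  exact
    { whole := toFinset_eq_of_satisfies hW hpad (p := []) (r := []) (p' := []) (r' := [])
        rfl rfl ha₁ hb₁
      head := fun t p q p' q' ht hu hv =>
        toFinset_eq_of_satisfies hW hpad (p := []) (r := q ++ [b]) (p' := []) (r' := q' ++ [b])
          (by simp [hu]) (by simp [hv]) ha₁ (hcount t ht)
      mid := fun s t p q r p' q' r' hs ht hu hv =>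
        toFinset_eq_of_satisfies hW hpad (p := a :: p) (r := r ++ [b]) (p' := a :: p')
          (r' := r' ++ [b]) (by simp [hu]) (by simp [hv]) (hcount s hs) (hcount t ht)
      tail := fun t p q p' q' ht hu hv =>
        toFinset_eq_of_satisfies hW hpad (p := a :: p) (r := []) (p' := a :: p') (r' := [])
          (by simp [hu]) (by simp [hv]) (hcount t ht) hb₁ }

end Stable

theorem stmt1 (M : Type*) [Monoid M]
    (h : Stable {w : Word | ∃ n m : ℕ, 1 ≤ n ∧ 1 ≤ m ∧
      w = List.replicate n 0 ++ 1 :: 2 :: List.replicate m 0} M) :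
    ∀ u : Word, BlockSimple u → IsTerm tau1gamma M u := by
  intro u hu v huv
  have hW : Stable xtsLang M := h
  have hblocks := sameBlockContent_of_satisfies hW huv
  have hsimple := count_eq_one_iff_of_satisfies hW huv
  have hskel : u.filter (fun x => u.count x = 1) = v.filter (fun x => u.count x = 1) := by
    simpa only [skeleton, hsimple] using skeleton_eq_of_satisfies hW huv
  exact ⟨tau1_of_sameBlockContent hskel hu.blockSimpleWith hblocks,
    gamma_of_count_eq_one_iff hblocks.whole hsimple⟩
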